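/- arXiv:1311.1023 — 3 statements merged into one kernel-verified Lean document; each statement's English description precedes it below -/
import Mathlib

section
/- For square matrices A and B and real h, the Strang splitting S(h) = e^{(h/2)A}·e^{hB}·e^{(h/2)A} satisfies S(h) = e^{h(A+B)} + O(h³), i.e., there exist C > 0 and δ > 0 such that for all |h| < δ, ‖S(h) - e^{h(A+B)}‖ ≤ C·|h|³. -/
/-!
Replace each exponential `exp X` by its second-order Taylor polynomial `1 + X + X²/2`; for
`X = O(t)` this costs `O(t³)`, and the remaining factors of the product are bounded near `0`.
The three Taylor polynomials multiply to the Taylor polynomial of `t • (A + B)` up to `t³` times a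
polynomial in `t`: because the splitting is symmetric, the second-order terms
`t²(A²/8 + A²/4 + A²/8 + AB/2 + BA/2 + B²/2)` add up exactly to `(t²/2)(A + B)²`.
-/

open NormedSpace Asymptotics Filter Topology

theorem mul_mul_sub_telescope {R : Type*} [Ring R] (e₁ e₂ e₃ p₁ p₂ p₃ : R) :
    e₁ * e₂ * e₁ - e₃ =
      (e₁ - p₁) * e₂ * e₁ + p₁ * (e₂ - p₂) * e₁ + p₁ * p₂ * (e₁ - p₁)
        + (p₁ * p₂ * p₁ - p₃) - (e₃ - p₃) := by
  noncomm_ring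

section

variable {𝕂 𝔸 : Type*} [NontriviallyNormedField 𝕂] [NormedRing 𝔸] [NormedAlgebra 𝕂 𝔸]
  {α : Type*} {l : Filter α}

theorem expSeries_partialSum_three (x : 𝔸) :
    (expSeries 𝕂 𝔸).partialSum 3 x = 1 + x + (2⁻¹ : 𝕂) • (x * x) := by
  simp [FormalMultilinearSeries.partialSum, Finset.sum_range_succ, expSeries_apply_eq, pow_two]

theorem isBigO_smul_const (f : α → 𝕂) (M : 𝔸) : (fun a => f a • M) =O[l] f :=
  .of_bound ‖M‖ (.of_forall fun a => by rw [norm_smul, mul_comm])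

theorem Asymptotics.IsBigO.partialSum_isBigO_one {x : α → 𝔸} {g : α → 𝕂} (hx : x =O[l] g)
    (hg : Tendsto g l (𝓝 0)) (n : ℕ) :
    (fun a => (expSeries 𝕂 𝔸).partialSum n (x a)) =O[l] fun _ => (1 : 𝕂) :=
  (((expSeries 𝕂 𝔸).partialSum_continuous n).tendsto 0 |>.comp
    (hx.trans_tendsto hg)).isBigO_one 𝕂

variable [CharZero 𝕂]

theorem strang_taylor_identity (A B : 𝔸) (t : 𝕂) :
    (expSeries 𝕂 𝔸).partialSum 3 ((t / 2) • A) * (expSeries 𝕂 𝔸).partialSum 3 (t • B)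
        * (expSeries 𝕂 𝔸).partialSum 3 ((t / 2) • A)
        - (expSeries 𝕂 𝔸).partialSum 3 (t • (A + B))
      = t ^ 3 • ((8⁻¹ : 𝕂) • (B * A * A + A * A * A + A * A * B)
            + (4⁻¹ : 𝕂) • (B * B * A + A * B * A + A * B * B)
          + t • ((16⁻¹ : 𝕂) • (B * B * A * A + A * B * A * A + A * A * B * A + A * A * B * B)
            + (8⁻¹ : 𝕂) • (A * B * B * A) + (64⁻¹ : 𝕂) • (A * A * A * A))
          + t ^ 2 • ((32⁻¹ : 𝕂) • (A * B * B * A * A + A * A * B * B * A)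
            + (64⁻¹ : 𝕂) • (A * A * B * A * A))
          + t ^ 3 • (128⁻¹ : 𝕂) • (A * A * B * B * A * A)) := by
  simp only [expSeries_partialSum_three, mul_add, add_mul, smul_mul_assoc, mul_smul_comm,
    smul_smul, mul_one, one_mul, smul_add, mul_assoc]
  match_scalars <;> ring

theorem strang_taylor_sub_isBigO (A B : 𝔸) :
    (fun t : 𝕂 => (expSeries 𝕂 𝔸).partialSum 3 ((t / 2) • A)
        * (expSeries 𝕂 𝔸).partialSum 3 (t • B) * (expSeries 𝕂 𝔸).partialSum 3 ((t / 2) • A)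
        - (expSeries 𝕂 𝔸).partialSum 3 (t • (A + B))) =O[𝓝 0] fun t => t ^ 3 := by
  simp_rw [strang_taylor_identity]
  refine ((isBigO_refl (fun t : 𝕂 => t ^ 3) _).smul
    ((Continuous.tendsto ?_ 0).isBigO_one 𝕂)).congr_right fun t => mul_one _
  fun_prop

variable [ContinuousSMul ℚ 𝕂] [CompleteSpace 𝔸]

theorem Asymptotics.IsBigO.exp_sub_partialSum {x : α → 𝔸} {g : α → 𝕂} (hx : x =O[l] g)
    (hg : Tendsto g l (𝓝 0)) (n : ℕ) :
    (fun a => exp (x a) - (expSeries 𝕂 𝔸).partialSum n (x a)) =O[l] fun a => g a ^ n := by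
  have taylor := (exp_hasFPowerSeriesAt_zero (𝕂 := 𝕂) (𝔸 := 𝔸)).isBigO_sub_partialSum_pow n
  simp only [zero_add] at taylor
  exact (taylor.comp_tendsto (hx.trans_tendsto hg)).trans (hx.norm_left.pow n)

theorem Asymptotics.IsBigO.exp_isBigO_one {x : α → 𝔸} {g : α → 𝕂} (hx : x =O[l] g)
    (hg : Tendsto g l (𝓝 0)) :
    (fun a => exp (x a)) =O[l] fun _ => (1 : 𝕂) :=
  ((exp_hasFPowerSeriesAt_zero (𝕂 := 𝕂)).continuousAt.tendsto.comp
    (hx.trans_tendsto hg)).isBigO_one 𝕂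

theorem strang_splitting_isBigO (A B : 𝔸) :
    (fun t : 𝕂 => exp ((t / 2) • A) * exp (t • B) * exp ((t / 2) • A) - exp (t • (A + B)))
      =O[𝓝 0] fun t => t ^ 3 := by
  have hg : Tendsto (fun t : 𝕂 => t) (𝓝 0) (𝓝 0) := tendsto_id
  have hA : (fun t : 𝕂 => (t / 2) • A) =O[𝓝 0] fun t => t :=
    (isBigO_smul_const _ A).trans <| by
      simpa only [div_eq_inv_mul] using isBigO_const_mul_self (2⁻¹ : 𝕂) (fun t => t) _
  have hB : (fun t : 𝕂 => t • B) =O[𝓝 0] fun t => t := isBigO_smul_const _ B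
  have hAB : (fun t : 𝕂 => t • (A + B)) =O[𝓝 0] fun t => t := isBigO_smul_const _ _
  have h₁ := ((hA.exp_sub_partialSum hg 3).mul (hB.exp_isBigO_one hg)).mul
    (hA.exp_isBigO_one hg)
  have h₂ := ((hA.partialSum_isBigO_one hg 3).mul (hB.exp_sub_partialSum hg 3)).mul
    (hA.exp_isBigO_one hg)
  have h₃ := ((hA.partialSum_isBigO_one hg 3).mul (hB.partialSum_isBigO_one hg 3)).mul
    (hA.exp_sub_partialSum hg 3)
  simp only [mul_one, one_mul] at h₁ h₂ h₃
  exact ((((h₁.add h₂).add h₃).add (strang_taylor_sub_isBigO A B)).sub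
    (hAB.exp_sub_partialSum hg 3)).congr_left fun t => (mul_mul_sub_telescope _ _ _ _ _ _).symm

end

theorem stmt_3 (n : ℕ)
    (A B : EuclideanSpace ℂ (Fin n) →L[ℂ] EuclideanSpace ℂ (Fin n)) :
    ∃ C > 0, ∃ δ > 0, ∀ h : ℝ, |h| < δ →
      ‖NormedSpace.exp (((h : ℂ) / 2) • A) * NormedSpace.exp ((h : ℂ) • B)
          * NormedSpace.exp (((h : ℂ) / 2) • A)
        - NormedSpace.exp ((h : ℂ) • (A + B))‖ ≤ C * |h| ^ 3 := by
  have hreal := (strang_splitting_isBigO A B).comp_tendsto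
    (Complex.continuous_ofReal.tendsto' 0 0 Complex.ofReal_zero)
  obtain ⟨C, hC, hbound⟩ := hreal.exists_pos
  obtain ⟨δ, hδ, hball⟩ := Metric.eventually_nhds_iff.1 hbound.bound
  refine ⟨C, hC, δ, hδ, fun h hh => ?_⟩
  simpa only [Function.comp_def, norm_pow, Complex.norm_real, Real.norm_eq_abs] using
    hball (by simpa using hh)
end

section
/- The fourth-order extrapolation of the Strang splitting, Φ(h) = (4/3)·S(h/2)² − (1/3)·S(h) where S(h) = e^{(h/2)A}·e^{hB}·e^{(h/2)A}, satisfies Φ(h) = e^{h(A+B)} + O(h⁵) for square matrices A and B. -/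
/-!
Expand every factor as a power series in `h` with coefficients in the Banach algebra: products of
absolutely convergent series are Cauchy products, so the error `Φ(h) - exp(h(A + B))` is itself an
entire series `∑ hᵏ eₖ`, and on the unit disc it is bounded by `|h|⁵ ∑ ‖eₖ‖` once `e₀ = ⋯ = e₄ = 0`.
Those five identities hold because the Strang step is symmetric, `S(h) S(-h) = 1`, so that
`S(h) = exp(h(A + B) + h³E + O(h⁵))` and `S(h/2)² = exp(h(A + B) + h³E/4 + O(h⁵))`: the weights
`4/3, -1/3` cancel every term linear in `E`, i.e. all terms of order 3 and 4. Here they are checked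
directly, as identities of noncommutative polynomials in `A` and `B`.
-/

open NormedSpace Nat Finset

noncomputable def strangS (n : ℕ)
    (A B : EuclideanSpace ℂ (Fin n) →L[ℂ] EuclideanSpace ℂ (Fin n)) (h : ℂ) :
    EuclideanSpace ℂ (Fin n) →L[ℂ] EuclideanSpace ℂ (Fin n) :=
  NormedSpace.exp ((h / 2) • A) * NormedSpace.exp (h • B)
    * NormedSpace.exp ((h / 2) • A)

variable {𝔸 : Type*} [NormedRing 𝔸] [NormedAlgebra ℂ 𝔸]

noncomputable def expCoeff (X : 𝔸) (k : ℕ) : 𝔸 := (k ! : ℂ)⁻¹ • X ^ k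

noncomputable def cauchyProduct (c d : ℕ → 𝔸) (n : ℕ) : 𝔸 :=
  ∑ p ∈ antidiagonal n, c p.1 * d p.2

def EntireCoeffs (c : ℕ → 𝔸) : Prop := ∀ z : ℂ, Summable fun k => ‖z ^ k • c k‖

noncomputable def evalSeries (c : ℕ → 𝔸) (z : ℂ) : 𝔸 := ∑' k, z ^ k • c k

section EntireCoeffs

variable {c d : ℕ → 𝔸}

lemma pow_smul_expCoeff (z : ℂ) (X : 𝔸) (k : ℕ) :
    z ^ k • expCoeff X k = (k ! : ℂ)⁻¹ • (z • X) ^ k := by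
  rw [expCoeff, smul_pow, smul_comm]

lemma pow_smul_cauchyProduct (z : ℂ) (c d : ℕ → 𝔸) (n : ℕ) :
    z ^ n • cauchyProduct c d n = ∑ p ∈ antidiagonal n, (z ^ p.1 • c p.1) * (z ^ p.2 • d p.2) := by
  rw [cauchyProduct, smul_sum]
  refine sum_congr rfl fun p hp => ?_
  rw [smul_mul_smul_comm, ← pow_add, mem_antidiagonal.mp hp]

lemma entireCoeffs_expCoeff (X : 𝔸) : EntireCoeffs (expCoeff X) := fun z => by
  simpa only [pow_smul_expCoeff] using norm_expSeries_summable' (𝕂 := ℂ) (z • X)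

lemma EntireCoeffs.cauchyProduct (hc : EntireCoeffs c) (hd : EntireCoeffs d) :
    EntireCoeffs (cauchyProduct c d) := fun z => by
  simpa only [pow_smul_cauchyProduct] using
    summable_norm_sum_mul_antidiagonal_of_summable_norm (hc z) (hd z)

lemma EntireCoeffs.pow_smul (hc : EntireCoeffs c) (a : ℂ) :
    EntireCoeffs fun k => a ^ k • c k := fun z => by
  simpa only [smul_smul, ← mul_pow] using hc (z * a)

lemma EntireCoeffs.smul (hc : EntireCoeffs c) (a : ℂ) : EntireCoeffs (a • c) := fun z => by
  simpa only [Pi.smul_apply, smul_comm _ a, norm_smul] using (hc z).mul_left ‖a‖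

lemma EntireCoeffs.sub (hc : EntireCoeffs c) (hd : EntireCoeffs d) : EntireCoeffs (c - d) :=
  fun z => ((hc z).add (hd z)).of_nonneg_of_le (fun _ => norm_nonneg _) fun k => by
    simpa only [Pi.sub_apply, smul_sub] using norm_sub_le _ _

lemma norm_evalSeries_le (hc : EntireCoeffs c) {N : ℕ} (hN : ∀ k < N, c k = 0) {z : ℂ}
    (hz : ‖z‖ ≤ 1) : ‖evalSeries c z‖ ≤ (∑' k, ‖c k‖) * ‖z‖ ^ N := by
  have hterm : ∀ k, ‖z ^ k • c k‖ ≤ ‖z‖ ^ N * ‖c k‖ := fun k => by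
    rcases lt_or_ge k N with hk | hk
    · simp [hN k hk]
    · rw [norm_smul, norm_pow]
      exact mul_le_mul_of_nonneg_right (pow_le_pow_of_le_one (norm_nonneg z) hz hk) (norm_nonneg _)
  have hsum : Summable fun k => ‖c k‖ := by simpa using hc 1
  calc ‖evalSeries c z‖ ≤ ∑' k, ‖z ^ k • c k‖ := norm_tsum_le_tsum_norm (hc z)
    _ ≤ ∑' k, ‖z‖ ^ N * ‖c k‖ := (hc z).tsum_le_tsum hterm (hsum.mul_left _)
    _ = (∑' k, ‖c k‖) * ‖z‖ ^ N := by rw [tsum_mul_left, mul_comm]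

lemma exp_smul_eq_evalSeries (X : 𝔸) (z : ℂ) : exp (z • X) = evalSeries (expCoeff X) z := by
  simp only [exp_eq_tsum ℂ, evalSeries, pow_smul_expCoeff]

lemma evalSeries_pow_smul (c : ℕ → 𝔸) (a z : ℂ) :
    evalSeries (fun k => a ^ k • c k) z = evalSeries c (z * a) := by
  simp only [evalSeries, smul_smul, ← mul_pow]

lemma evalSeries_smul (c : ℕ → 𝔸) (a z : ℂ) : evalSeries (a • c) z = a • evalSeries c z := by
  simp only [evalSeries, Pi.smul_apply, smul_comm _ a]
  exact tsum_const_smul'' a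

variable [CompleteSpace 𝔸]

lemma evalSeries_mul (hc : EntireCoeffs c) (hd : EntireCoeffs d) (z : ℂ) :
    evalSeries c z * evalSeries d z = evalSeries (cauchyProduct c d) z := by
  simp only [evalSeries, pow_smul_cauchyProduct]
  exact tsum_mul_tsum_eq_tsum_sum_antidiagonal_of_summable_norm (hc z) (hd z)

lemma evalSeries_sub (hc : EntireCoeffs c) (hd : EntireCoeffs d) (z : ℂ) :
    evalSeries (c - d) z = evalSeries c z - evalSeries d z := by
  simp only [evalSeries, Pi.sub_apply, smul_sub]
  exact (hc z).of_norm.tsum_sub (hd z).of_norm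

end EntireCoeffs

section Strang

variable (A B : 𝔸)

noncomputable def strangCoeff : ℕ → 𝔸 :=
  cauchyProduct (cauchyProduct (expCoeff ((2 : ℂ)⁻¹ • A)) (expCoeff B)) (expCoeff ((2 : ℂ)⁻¹ • A))

noncomputable def halfStrangCoeff : ℕ → 𝔸 := fun k => (2 : ℂ)⁻¹ ^ k • strangCoeff A B k

noncomputable def extrapolationErrorCoeff : ℕ → 𝔸 :=
  (4 / 3 : ℂ) • cauchyProduct (halfStrangCoeff A B) (halfStrangCoeff A B)
    - (1 / 3 : ℂ) • strangCoeff A B - expCoeff (A + B)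

lemma entireCoeffs_strangCoeff : EntireCoeffs (strangCoeff A B) :=
  (((entireCoeffs_expCoeff _).cauchyProduct (entireCoeffs_expCoeff _)).cauchyProduct
    (entireCoeffs_expCoeff _))

lemma entireCoeffs_halfStrangCoeff : EntireCoeffs (halfStrangCoeff A B) :=
  (entireCoeffs_strangCoeff A B).pow_smul _

lemma entireCoeffs_extrapolationErrorCoeff : EntireCoeffs (extrapolationErrorCoeff A B) :=
  have hH := entireCoeffs_halfStrangCoeff A B
  (((hH.cauchyProduct hH).smul _).sub ((entireCoeffs_strangCoeff A B).smul _)).sub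
    (entireCoeffs_expCoeff _)

lemma extrapolationErrorCoeff_eq_zero {k : ℕ} (hk : k < 5) : extrapolationErrorCoeff A B k = 0 := by
  interval_cases k <;>
  · simp only [extrapolationErrorCoeff, halfStrangCoeff, strangCoeff, cauchyProduct, expCoeff,
      Pi.sub_apply, Pi.smul_apply, Nat.sum_antidiagonal_eq_sum_range_succ_mk, sum_range_succ,
      sum_range_zero]
    norm_num [Nat.factorial, smul_pow, pow_succ, smul_mul_assoc, mul_smul_comm, smul_smul,
      mul_add, add_mul, smul_add, mul_assoc]
    module

variable [CompleteSpace 𝔸]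

lemma exp_half_mul_exp_mul_exp_half (z : ℂ) :
    exp ((z / 2) • A) * exp (z • B) * exp ((z / 2) • A) = evalSeries (strangCoeff A B) z := by
  have hA : (z / 2) • A = z • ((2 : ℂ)⁻¹ • A) := by rw [smul_smul, div_eq_mul_inv]
  rw [hA, exp_smul_eq_evalSeries, exp_smul_eq_evalSeries B,
    evalSeries_mul (entireCoeffs_expCoeff _) (entireCoeffs_expCoeff _),
    evalSeries_mul ((entireCoeffs_expCoeff _).cauchyProduct (entireCoeffs_expCoeff _))
      (entireCoeffs_expCoeff _)]
  rfl

lemma extrapolation_sub_exp_eq_evalSeries (z : ℂ) :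
    (4 / 3 : ℂ) • ((exp ((z / 2 / 2) • A) * exp ((z / 2) • B) * exp ((z / 2 / 2) • A))
        * (exp ((z / 2 / 2) • A) * exp ((z / 2) • B) * exp ((z / 2 / 2) • A)))
      - (1 / 3 : ℂ) • (exp ((z / 2) • A) * exp (z • B) * exp ((z / 2) • A))
      - exp (z • (A + B)) = evalSeries (extrapolationErrorCoeff A B) z := by
  have hhalf : evalSeries (strangCoeff A B) (z / 2) = evalSeries (halfStrangCoeff A B) z := by
    rw [div_eq_mul_inv, ← evalSeries_pow_smul]
    rfl
  have hS := entireCoeffs_strangCoeff A B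
  have hH := entireCoeffs_halfStrangCoeff A B
  rw [exp_half_mul_exp_mul_exp_half, exp_half_mul_exp_mul_exp_half, exp_smul_eq_evalSeries, hhalf,
    evalSeries_mul hH hH, extrapolationErrorCoeff,
    evalSeries_sub (((hH.cauchyProduct hH).smul _).sub (hS.smul _)) (entireCoeffs_expCoeff _),
    evalSeries_sub ((hH.cauchyProduct hH).smul _) (hS.smul _), evalSeries_smul, evalSeries_smul]

end Strang

theorem stmt_4 (n : ℕ)
    (A B : EuclideanSpace ℂ (Fin n) →L[ℂ] EuclideanSpace ℂ (Fin n)) :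
    ∃ C > 0, ∃ δ > 0, ∀ h : ℝ, |h| < δ →
      ‖(4 / 3 : ℂ) • (strangS n A B ((h : ℂ) / 2) * strangS n A B ((h : ℂ) / 2))
        - (1 / 3 : ℂ) • strangS n A B (h : ℂ)
        - NormedSpace.exp ((h : ℂ) • (A + B))‖ ≤ C * |h| ^ 5 := by
  set e := extrapolationErrorCoeff A B
  refine ⟨∑' k, ‖e k‖ + 1, by positivity, 1, one_pos, fun h hh => ?_⟩
  have hnorm : ‖(h : ℂ)‖ = |h| := Complex.norm_real h
  calc _ = ‖evalSeries e h‖ := congrArg norm (extrapolation_sub_exp_eq_evalSeries A B h)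
    _ ≤ (∑' k, ‖e k‖) * |h| ^ 5 := hnorm ▸ norm_evalSeries_le
        (entireCoeffs_extrapolationErrorCoeff A B) (fun _ => extrapolationErrorCoeff_eq_zero A B)
        (hnorm ▸ hh.le)
    _ ≤ (∑' k, ‖e k‖ + 1) * |h| ^ 5 := by gcongr; linarith
end

section
/- Given a₁ ∈ (0, 1/2) and a₂ = 1/2 − a₁, the system of polynomial equations 2(b₁+b₂)+b₃ = 1 (consistency), Σᵢ wᵢcᵢ(1−cᵢ) = 1/6 and Σᵢ (1/2)wᵢ²cᵢ + Σ_{i<j} wᵢwⱼcⱼ = 1/3 (with symmetric weights (w) = (b₁,b₂,b₃,b₂,b₁) at nodes (0,a₁,1/2,a₁+2a₂,1)) for the 4-stage symmetric BAB coefficients has no solution with b₁, b₂, b₃ all real. -/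
theorem stmt_13 (a₁ : ℝ) (ha₁ : a₁ ∈ Set.Ioo (0 : ℝ) (1 / 2)) (a₂ : ℝ)
    (ha₂ : a₂ = 1 / 2 - a₁) :
    ¬ ∃ b₁ b₂ b₃ : ℝ,
      -- nodes
      let c₁ : ℝ := 0
      let c₂ : ℝ := a₁
      let c₃ : ℝ := a₁ + a₂
      let c₄ : ℝ := a₁ + 2 * a₂
      let c₅ : ℝ := 1
      -- consistency
      (2 * (b₁ + b₂) + b₃ = 1) ∧
      -- p_aba = 0
      (b₁ * c₁ * (1 - c₁) + b₂ * c₂ * (1 - c₂) + b₃ * c₃ * (1 - c₃)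
        + b₂ * c₄ * (1 - c₄) + b₁ * c₅ * (1 - c₅) = 1 / 6) ∧
      -- p_abb = 0
      ((1 / 2) * (b₁ ^ 2 * c₁ + b₂ ^ 2 * c₂ + b₃ ^ 2 * c₃ + b₂ ^ 2 * c₄ + b₁ ^ 2 * c₅)
        + (b₁ * b₂ * c₂ + b₁ * b₃ * c₃ + b₁ * b₂ * c₄ + b₁ * b₁ * c₅
          + b₂ * b₃ * c₃ + b₂ * b₂ * c₄ + b₂ * b₁ * c₅
          + b₃ * b₂ * c₄ + b₃ * b₁ * c₅
          + b₂ * b₁ * c₅) = 1 / 3) := by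
  obtain ⟨ha0, hah⟩ := ha₁
  subst ha₂
  rintro ⟨b₁, b₂, b₃, h1, h2, h3⟩
  have hb3 : b₃ = 1 - 2 * (b₁ + b₂) := by linarith
  subst hb3
  have hb1 : b₁ = 1/6 + 4 * a₁ * (1 - a₁) * b₂ - b₂ := by linear_combination (-2 : ℝ) * h2
  subst hb1
  -- key quadratic in b₂
  have key : a₁ * (1 - 8*a₁^2 + 8*a₁^3) * b₂^2
      - (2/3) * a₁ * (1 - 2*a₁) * b₂ + 1/72 = 0 := by linear_combination -h3
  clear h1 h2 h3
  have hα : 0 < a₁ * (1 - 8*a₁^2 + 8*a₁^3) := by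
    nlinarith [mul_pos ha0 (by linarith : (0:ℝ) < 1 - 2*a₁), sq_nonneg a₁,
      mul_pos (mul_pos ha0 ha0) (by linarith : (0:ℝ) < 1 - 2*a₁)]
  have hq : 0 < 12*a₁^2 - 6*a₁ + 1 := by nlinarith [sq_nonneg (4*a₁ - 1)]
  have h2a : (0:ℝ) < 1 - 2*a₁ := by linarith
  have hpos : 0 < a₁ * (1 - 2*a₁) * (12*a₁^2 - 6*a₁ + 1) := by
    exact mul_pos (mul_pos ha0 h2a) hq
  have final : (2 * (a₁ * (1 - 8*a₁^2 + 8*a₁^3)) * b₂ - (2/3) * a₁ * (1 - 2*a₁))^2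
      + a₁ * (1 - 2*a₁) * (12*a₁^2 - 6*a₁ + 1) / 18 = 0 := by
    linear_combination (4 * (a₁ * (1 - 8*a₁^2 + 8*a₁^3))) * key
  nlinarith [sq_nonneg (2 * (a₁ * (1 - 8*a₁^2 + 8*a₁^3)) * b₂ - (2/3) * a₁ * (1 - 2*a₁)),
    hpos, final]
end
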